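/- arXiv:2109.11154 — 2 statements merged into one kernel-verified Lean document; each statement's English description precedes it below -/
import Mathlib

section
/- Let T ∈ ℝ^{(d−r)×k} and S ∈ ℝ^{r×k}, and let γ > 0 with γ‖S‖² ≤ 1/2 and γ‖T‖² ≤ 1/2. Define N(T) = T − γ(T TᵀT + T SᵀS). Then ‖N(T) Sᵀ‖ ≤ ‖T Sᵀ‖, where ‖·‖ is the spectral norm. -/
/-!
Write `N Sᵀ = P (T Sᵀ) + (T Sᵀ) Q` with `P = ½ I - γ T Tᵀ` and `Q = ½ I - γ S Sᵀ`. For any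
operator `g` with `γ ‖g‖² ≤ 2c` the operator `c - γ g g†` has norm at most `c`: expanding
`‖c x - γ g g† x‖²` the cross term `-2cγ ‖g† x‖²` absorbs `γ² ‖g g† x‖²`. Hence `‖P‖, ‖Q‖ ≤ ½`
and the triangle inequality gives `‖N Sᵀ‖ ≤ ½ ‖T Sᵀ‖ + ½ ‖T Sᵀ‖`.
-/

open Matrix

/-- Spectral (operator) norm of a real matrix, via the induced Euclidean operator norm. -/
noncomputable def specNorm {m n : ℕ} (A : Matrix (Fin m) (Fin n) ℝ) : ℝ :=
  ‖(Matrix.toEuclideanLin (𝕜 := ℝ) A).toContinuousLinearMap‖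

open scoped Matrix.Norms.L2Operator RealInnerProductSpace

namespace ContinuousLinearMap

variable {E F : Type*} [NormedAddCommGroup E] [InnerProductSpace ℝ E] [CompleteSpace E]
  [NormedAddCommGroup F] [InnerProductSpace ℝ F] [CompleteSpace F]

theorem norm_smul_one_sub_smul_comp_adjoint_le (g : F →L[ℝ] E) {c γ : ℝ} (hγ : 0 ≤ γ)
    (hg : γ * ‖g‖ ^ 2 ≤ 2 * c) : ‖c • (1 : E →L[ℝ] E) - γ • (g ∘L adjoint g)‖ ≤ c := by
  have hc : 0 ≤ c := by nlinarith [sq_nonneg ‖g‖]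
  refine opNorm_le_bound _ hc fun x ↦ ?_
  set y := adjoint g x
  have hinner : ⟪x, g y⟫ = ‖y‖ ^ 2 := by
    rw [← adjoint_inner_left, real_inner_self_eq_norm_sq]
  have hgy : ‖g y‖ ≤ ‖g‖ * ‖y‖ := g.le_opNorm y
  have hsq : ‖c • x - γ • g y‖ ^ 2 ≤ (c * ‖x‖) ^ 2 := by
    rw [norm_sub_sq_real, real_inner_smul_left, real_inner_smul_right, hinner, norm_smul, norm_smul,
      Real.norm_of_nonneg hc, Real.norm_of_nonneg hγ]
    nlinarith [mul_le_mul_of_nonneg_left (pow_le_pow_left₀ (norm_nonneg _) hgy 2) (sq_nonneg γ),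
      mul_le_mul_of_nonneg_right hg (mul_nonneg hγ (sq_nonneg ‖y‖))]
  simpa using (pow_le_pow_iff_left₀ (norm_nonneg _) (by positivity) two_ne_zero).1 hsq

end ContinuousLinearMap

namespace Matrix

variable {m n : Type*} [Fintype m] [Fintype n] [DecidableEq m] [DecidableEq n]

theorem toEuclideanCLM_mul_transpose (A : Matrix m n ℝ) :
    toEuclideanCLM (𝕜 := ℝ) (A * Aᵀ) =
      (toEuclideanLin A).toContinuousLinearMap ∘L
        ContinuousLinearMap.adjoint (toEuclideanLin A).toContinuousLinearMap := by
  rw [← LinearMap.adjoint_toContinuousLinearMap, ← toEuclideanLin_conjTranspose_eq_adjoint,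
    conjTranspose_eq_transpose_of_trivial]
  ext x i
  simp [mulVec_mulVec]

theorem l2_opNorm_smul_one_sub_smul_mul_transpose_le (A : Matrix m n ℝ) {c γ : ℝ} (hγ : 0 ≤ γ)
    (hA : γ * ‖A‖ ^ 2 ≤ 2 * c) : ‖c • (1 : Matrix m m ℝ) - γ • (A * Aᵀ)‖ ≤ c := by
  rw [← l2_opNorm_toEuclideanCLM, map_sub, map_smul, map_smul, map_one,
    toEuclideanCLM_mul_transpose]
  exact ContinuousLinearMap.norm_smul_one_sub_smul_comp_adjoint_le _ hγ hA

end Matrix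

theorem specNorm_eq_l2_opNorm {m n : ℕ} (A : Matrix (Fin m) (Fin n) ℝ) : specNorm A = ‖A‖ := rfl

/-- For `N(T) = T - γ (T Tᵀ T + T Sᵀ S)`, under `γ ‖S‖² ≤ 1/2` and `γ ‖T‖² ≤ 1/2`,
`‖N(T) Sᵀ‖ ≤ ‖T Sᵀ‖`. -/
theorem stmt12 {d r k : ℕ} (T : Matrix (Fin (d - r)) (Fin k) ℝ) (S : Matrix (Fin r) (Fin k) ℝ)
    (γ : ℝ) (hγpos : 0 < γ) (hγS : γ * specNorm S ^ 2 ≤ 1 / 2) (hγT : γ * specNorm T ^ 2 ≤ 1 / 2)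
    (N : Matrix (Fin (d - r)) (Fin k) ℝ) (hN : N = T - γ • (T * Tᵀ * T + T * Sᵀ * S)) :
    specNorm (N * Sᵀ) ≤ specNorm (T * Sᵀ) := by
  set P := (1 / 2 : ℝ) • (1 : Matrix _ _ ℝ) - γ • (T * Tᵀ)
  set Q := (1 / 2 : ℝ) • (1 : Matrix _ _ ℝ) - γ • (S * Sᵀ)
  have hsplit : N * Sᵀ = P * (T * Sᵀ) + (T * Sᵀ) * Q := by
    simp only [hN, P, Q, Matrix.sub_mul, Matrix.mul_sub, Matrix.smul_mul, Matrix.mul_smul,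
      Matrix.add_mul, Matrix.one_mul, Matrix.mul_one, Matrix.mul_assoc]
    module
  have hP : ‖P‖ ≤ 1 / 2 :=
    T.l2_opNorm_smul_one_sub_smul_mul_transpose_le hγpos.le
      (by rw [← specNorm_eq_l2_opNorm]; linarith)
  have hQ : ‖Q‖ ≤ 1 / 2 :=
    S.l2_opNorm_smul_one_sub_smul_mul_transpose_le hγpos.le
      (by rw [← specNorm_eq_l2_opNorm]; linarith)
  rw [specNorm_eq_l2_opNorm, specNorm_eq_l2_opNorm]
  calc ‖N * Sᵀ‖ ≤ ‖P‖ * ‖T * Sᵀ‖ + ‖T * Sᵀ‖ * ‖Q‖ := by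
        rw [hsplit]
        exact (norm_add_le _ _).trans (add_le_add (l2_opNorm_mul _ _) (l2_opNorm_mul _ _))
    _ ≤ 1 / 2 * ‖T * Sᵀ‖ + ‖T * Sᵀ‖ * (1 / 2) := by gcongr
    _ = ‖T * Sᵀ‖ := by ring
end

section
/- Let ‖·‖ denote the spectral norm and ‖·‖_F the Frobenius norm. Suppose the sign-weighted empirical matrix D(X) = (1/m) Σᵢ sign(⟨Aᵢ,X⟩) Aᵢ satisfies the operator-norm restricted direction preserving property: ‖D(X) − √(2/π)·X/‖X‖_F‖ ≤ δ/√(k′) for all symmetric X with rank(X) ≤ k′ and X ≠ 0 (no corruption, scale √(2/π)). Then the ℓ₁/ℓ₂-RIP holds with parameter δ: for all symmetric X with rank(X) ≤ k′, |(1/m) Σᵢ |⟨Aᵢ, X⟩| − √(2/π)‖X‖_F| ≤ δ ‖X‖_F. -/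
open Matrix BigOperators

/-- Frobenius norm of a real matrix. -/
noncomputable def frobNorm {d : ℕ} (A : Matrix (Fin d) (Fin d) ℝ) : ℝ :=
  Real.sqrt (∑ i, ∑ j, (A i j) ^ 2)

/-- Trace inner product of real matrices. -/
def ip {d : ℕ} (A B : Matrix (Fin d) (Fin d) ℝ) : ℝ := ∑ i, ∑ j, A i j * B i j

/-- Sign function: `1` for `t ≥ 0`, `-1` for `t < 0`. -/
noncomputable def signR (t : ℝ) : ℝ := if t < 0 then -1 else 1

/-!
Testing `D(X) - √(2/π) X/‖X‖_F` against `X` itself yields exactly the RIP deviation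
`(1/m) Σᵢ |⟨Aᵢ, X⟩| - √(2/π) ‖X‖_F`, since `sign(t) t = |t|`. Writing the symmetric matrix
`X = Σₖ λₖ uₖ uₖᵀ` in an orthonormal eigenbasis, `|⟨Y, X⟩| ≤ ‖Y‖ Σₖ |λₖ|`, and by Cauchy–Schwarz over
the at most `rank X` nonzero eigenvalues `Σₖ |λₖ| ≤ √(rank X) ‖X‖_F`. Hence the `δ / √k'`
operator-norm bound becomes the bound `δ ‖X‖_F`.
-/

open scoped InnerProductSpace

lemma Matrix.trace_toEuclideanLin {𝕜 n : Type*} [RCLike 𝕜] [Fintype n] [DecidableEq n]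
    (M : Matrix n n 𝕜) : LinearMap.trace 𝕜 _ (toEuclideanLin M) = M.trace := by
  rw [toEuclideanLin_eq_toLin_orthonormal, LinearMap.trace_eq_matrix_trace 𝕜
    (EuclideanSpace.basisFun n 𝕜).toBasis, LinearMap.toMatrix_toLin]

namespace Matrix.IsHermitian

variable {𝕜 n : Type*} [RCLike 𝕜] [Fintype n] [DecidableEq n]

lemma rank_pos {X : Matrix n n 𝕜} (hX : X.IsHermitian) (h : X ≠ 0) : 0 < X.rank := by
  rw [hX.rank_eq_card_non_zero_eigs, Fintype.card_pos_iff]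
  obtain ⟨k, hk⟩ := Function.ne_iff.mp (mt hX.eigenvalues_eq_zero_iff.mp h)
  exact ⟨⟨k, hk⟩⟩

lemma toEuclideanLin_eigenvectorBasis {X : Matrix n n ℝ} (hX : X.IsHermitian) (k : n) :
    toEuclideanLin X (hX.eigenvectorBasis k) = hX.eigenvalues k • hX.eigenvectorBasis k := by
  ext i
  simp [toLpLin_apply, hX.mulVec_eigenvectorBasis]

lemma trace_mul_eq_sum_eigenvalues_mul_inner {X : Matrix n n ℝ} (hX : X.IsHermitian)
    (Y : Matrix n n ℝ) :
    (Y * X).trace = ∑ k, hX.eigenvalues k *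
      ⟪hX.eigenvectorBasis k, toEuclideanLin Y (hX.eigenvectorBasis k)⟫_ℝ := by
  rw [← trace_toEuclideanLin, LinearMap.trace_eq_sum_inner _ hX.eigenvectorBasis]
  refine Finset.sum_congr rfl fun k _ => ?_
  rw [toLpLin_mul_same, LinearMap.comp_apply, hX.toEuclideanLin_eigenvectorBasis, map_smul,
    inner_smul_right]

lemma trace_mul_self_eq_sum_sq_eigenvalues {X : Matrix n n ℝ} (hX : X.IsHermitian) :
    (X * X).trace = ∑ k, hX.eigenvalues k ^ 2 := by
  rw [hX.trace_mul_eq_sum_eigenvalues_mul_inner]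
  refine Finset.sum_congr rfl fun k _ => ?_
  rw [hX.toEuclideanLin_eigenvectorBasis, inner_smul_right, real_inner_self_eq_norm_sq,
    hX.eigenvectorBasis.orthonormal.1 k]
  ring

end Matrix.IsHermitian

open Finset in
lemma sum_abs_le_sqrt_card_mul_sqrt_sum_sq {ι : Type*} [Fintype ι] [DecidableEq ι] (f : ι → ℝ) :
    ∑ i, |f i| ≤ √(#{i | f i ≠ 0} : ℕ) * √(∑ i, f i ^ 2) := by
  rw [← Real.sqrt_mul (Nat.cast_nonneg _), Real.le_sqrt (by positivity) (by positivity)]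
  calc (∑ i, |f i|) ^ 2 = (∑ i ∈ {i | f i ≠ 0}, |f i|) ^ 2 := by
        rw [sum_filter_of_ne fun i _ h => abs_ne_zero.mp h]
    _ ≤ #{i | f i ≠ 0} * ∑ i ∈ {i | f i ≠ 0}, |f i| ^ 2 := sq_sum_le_card_mul_sum_sq
    _ ≤ #{i | f i ≠ 0} * ∑ i, f i ^ 2 := by
        simp_rw [sq_abs]
        exact mul_le_mul_of_nonneg_left
          (sum_le_sum_of_subset_of_nonneg (subset_univ _) fun i _ _ => sq_nonneg (f i))
          (Nat.cast_nonneg _)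

lemma specNorm_nonneg {d : ℕ} (Y : Matrix (Fin d) (Fin d) ℝ) : 0 ≤ specNorm Y := norm_nonneg _

lemma abs_inner_toEuclideanLin_le_specNorm {d : ℕ} (Y : Matrix (Fin d) (Fin d) ℝ)
    {u : EuclideanSpace ℝ (Fin d)} (hu : ‖u‖ = 1) :
    |⟪u, toEuclideanLin Y u⟫_ℝ| ≤ specNorm Y := by
  calc |⟪u, toEuclideanLin Y u⟫_ℝ| ≤ ‖u‖ * ‖toEuclideanLin Y u‖ := abs_real_inner_le_norm _ _
    _ ≤ ‖u‖ * (specNorm Y * ‖u‖) := by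
      gcongr
      exact (toEuclideanLin Y).toContinuousLinearMap.le_opNorm u
    _ = specNorm Y := by rw [hu]; ring

section ip

variable {d : ℕ}

lemma ip_eq_trace_transpose_mul (Y X : Matrix (Fin d) (Fin d) ℝ) : ip Y X = (Xᵀ * Y).trace := by
  simp only [ip, trace, diag, mul_apply, transpose_apply]
  rw [Finset.sum_comm]
  simp [mul_comm]

lemma frobNorm_nonneg (X : Matrix (Fin d) (Fin d) ℝ) : 0 ≤ frobNorm X := Real.sqrt_nonneg _

lemma ip_self (X : Matrix (Fin d) (Fin d) ℝ) : ip X X = frobNorm X ^ 2 := by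
  rw [frobNorm, Real.sq_sqrt (by positivity)]
  simp [ip, sq]

lemma ip_sub_left (B C X : Matrix (Fin d) (Fin d) ℝ) : ip (B - C) X = ip B X - ip C X := by
  simp [ip, sub_mul, Finset.sum_sub_distrib]

lemma ip_smul_left (a : ℝ) (B X : Matrix (Fin d) (Fin d) ℝ) : ip (a • B) X = a * ip B X := by
  simp [ip, Finset.mul_sum, mul_assoc]

lemma ip_sum_left {ι : Type*} (s : Finset ι) (B : ι → Matrix (Fin d) (Fin d) ℝ)
    (X : Matrix (Fin d) (Fin d) ℝ) : ip (∑ t ∈ s, B t) X = ∑ t ∈ s, ip (B t) X := by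
  simp only [ip, Matrix.sum_apply, Finset.sum_mul]
  exact (Finset.sum_congr rfl fun i _ => Finset.sum_comm).trans Finset.sum_comm

open Finset in
lemma abs_ip_le_sqrt_rank_mul_specNorm_mul_frobNorm (Y X : Matrix (Fin d) (Fin d) ℝ)
    (hX : Xᵀ = X) : |ip Y X| ≤ √X.rank * specNorm Y * frobNorm X := by
  have hH : X.IsHermitian := isHermitian_iff_isSymm.mpr hX
  have hip : ∀ Z, ip Z X = (Z * X).trace := fun Z => by
    rw [ip_eq_trace_transpose_mul, hX, trace_mul_comm]
  have hfrob : frobNorm X = √(∑ k, hH.eigenvalues k ^ 2) := by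
    rw [← hH.trace_mul_self_eq_sum_sq_eigenvalues, ← hip, ip_self,
      Real.sqrt_sq (frobNorm_nonneg X)]
  have hrank : X.rank = #{k | hH.eigenvalues k ≠ 0} := by
    rw [hH.rank_eq_card_non_zero_eigs, Fintype.card_subtype]
  calc |ip Y X|
      ≤ ∑ k, |hH.eigenvalues k| * specNorm Y := by
        rw [hip, hH.trace_mul_eq_sum_eigenvalues_mul_inner]
        refine (Finset.abs_sum_le_sum_abs _ _).trans (Finset.sum_le_sum fun k _ => ?_)
        rw [abs_mul]
        gcongr
        exact abs_inner_toEuclideanLin_le_specNorm Y (hH.eigenvectorBasis.orthonormal.1 k)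
    _ ≤ √X.rank * frobNorm X * specNorm Y := by
        rw [← Finset.sum_mul, hfrob, hrank]
        gcongr
        exacts [specNorm_nonneg Y, sum_abs_le_sqrt_card_mul_sqrt_sum_sq _]
    _ = √X.rank * specNorm Y * frobNorm X := by ring

end ip

lemma signR_mul_self (t : ℝ) : signR t * t = |t| := by
  unfold signR
  split_ifs with h
  · rw [abs_of_neg h]; ring
  · rw [abs_of_nonneg (not_lt.mp h), one_mul]

lemma ip_signedMean_sub_smul_self {d m : ℕ} (A : Fin m → Matrix (Fin d) (Fin d) ℝ) (c : ℝ)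
    (X : Matrix (Fin d) (Fin d) ℝ) :
    ip ((m : ℝ)⁻¹ • ∑ i, signR (ip (A i) X) • A i - (c / frobNorm X) • X) X
      = (m : ℝ)⁻¹ * ∑ i, |ip (A i) X| - c * frobNorm X := by
  simp only [ip_sub_left, ip_smul_left, ip_sum_left, signR_mul_self, ip_self]
  rcases eq_or_ne (frobNorm X) 0 with h | h
  · simp [h]
  · field_simp

/-- The operator-norm restricted direction preserving property (with no corruption and scale
`√(2/π)`, parameter `δ/√k'`) implies the `ℓ₁/ℓ₂`-RIP with parameter `δ`. -/
theorem stmt18 {d m k' : ℕ} (A : Fin m → Matrix (Fin d) (Fin d) ℝ) (δ : ℝ)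
    (hRDPP : ∀ X : Matrix (Fin d) (Fin d) ℝ, Xᵀ = X → X.rank ≤ k' → X ≠ 0 →
      specNorm ((m : ℝ)⁻¹ • ∑ i, signR (ip (A i) X) • A i
          - (Real.sqrt (2 / Real.pi) / frobNorm X) • X)
        ≤ δ / Real.sqrt k') :
    ∀ X : Matrix (Fin d) (Fin d) ℝ, Xᵀ = X → X.rank ≤ k' →
      |(m : ℝ)⁻¹ * ∑ i, |ip (A i) X| - Real.sqrt (2 / Real.pi) * frobNorm X|
        ≤ δ * frobNorm X := by
  intro X hXt hrank
  obtain rfl | hX0 := eq_or_ne X 0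
  · simp [ip, frobNorm]
  -- `k' ≥ rank X > 0`, so `δ / √k'` is not the junk value `δ / 0`
  have hk : 0 < √(k' : ℝ) := Real.sqrt_pos.mpr <| Nat.cast_pos.mpr <|
    ((isHermitian_iff_isSymm.mpr hXt).rank_pos hX0).trans_le hrank
  rw [← ip_signedMean_sub_smul_self]
  calc _ ≤ √X.rank * specNorm _ * frobNorm X :=
        abs_ip_le_sqrt_rank_mul_specNorm_mul_frobNorm _ X hXt
    _ ≤ √k' * (δ / √k') * frobNorm X := by
        gcongr
        exacts [frobNorm_nonneg X, specNorm_nonneg _, hRDPP X hXt hrank hX0]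
    _ = δ * frobNorm X := by rw [mul_div_cancel₀ _ hk.ne']
end
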